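/- Let F be the free group on a, b. The automorphisms f_k (k ≥ 1) defined by f_k(a) = a^k b a^{-k}, f_k(b) = a^{k-1} b a^{-k} are pairwise non-conjugate in Aut(F). -/

import Mathlib

/-! Truncated Magnus group: units 1+n in ℤ⟨a,b⟩/(deg ≥ 4), coordinates = coefficients
of the 14 nonempty monomials of degree ≤ 3. -/
@[ext] structure GG where
  ca : ℤ
  cb : ℤ
  caa : ℤ
  cab : ℤ
  cba : ℤ
  cbb : ℤ
  caaa : ℤ
  caab : ℤ
  caba : ℤ
  cabb : ℤ
  cbaa : ℤ
  cbab : ℤ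
  cbba : ℤ
  cbbb : ℤ

namespace GG

def gmul (P Q : GG) : GG where
  ca := P.ca + Q.ca
  cb := P.cb + Q.cb
  caa := P.caa + Q.caa + P.ca * Q.ca
  cab := P.cab + Q.cab + P.ca * Q.cb
  cba := P.cba + Q.cba + P.cb * Q.ca
  cbb := P.cbb + Q.cbb + P.cb * Q.cb
  caaa := P.caaa + Q.caaa + P.ca * Q.caa + P.caa * Q.ca
  caab := P.caab + Q.caab + P.ca * Q.cab + P.caa * Q.cb
  caba := P.caba + Q.caba + P.ca * Q.cba + P.cab * Q.ca
  cabb := P.cabb + Q.cabb + P.ca * Q.cbb + P.cab * Q.cb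
  cbaa := P.cbaa + Q.cbaa + P.cb * Q.caa + P.cba * Q.ca
  cbab := P.cbab + Q.cbab + P.cb * Q.cab + P.cba * Q.cb
  cbba := P.cbba + Q.cbba + P.cb * Q.cba + P.cbb * Q.ca
  cbbb := P.cbbb + Q.cbbb + P.cb * Q.cbb + P.cbb * Q.cb

def ginv (P : GG) : GG where
  ca := -P.ca
  cb := -P.cb
  caa := -P.caa + P.ca * P.ca
  cab := -P.cab + P.ca * P.cb
  cba := -P.cba + P.cb * P.ca
  cbb := -P.cbb + P.cb * P.cb
  caaa := -P.caaa + P.ca * P.caa + P.caa * P.ca + -(P.ca * P.ca * P.ca)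
  caab := -P.caab + P.ca * P.cab + P.caa * P.cb + -(P.ca * P.ca * P.cb)
  caba := -P.caba + P.ca * P.cba + P.cab * P.ca + -(P.ca * P.cb * P.ca)
  cabb := -P.cabb + P.ca * P.cbb + P.cab * P.cb + -(P.ca * P.cb * P.cb)
  cbaa := -P.cbaa + P.cb * P.caa + P.cba * P.ca + -(P.cb * P.ca * P.ca)
  cbab := -P.cbab + P.cb * P.cab + P.cba * P.cb + -(P.cb * P.ca * P.cb)
  cbba := -P.cbba + P.cb * P.cba + P.cbb * P.ca + -(P.cb * P.cb * P.ca)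
  cbbb := -P.cbbb + P.cb * P.cbb + P.cbb * P.cb + -(P.cb * P.cb * P.cb)

instance : Mul GG := ⟨gmul⟩
instance : One GG := ⟨⟨0,0,0,0,0,0,0,0,0,0,0,0,0,0⟩⟩
instance : Inv GG := ⟨ginv⟩

theorem mul_def (P Q : GG) : P * Q = gmul P Q := rfl
theorem one_def : (1 : GG) = ⟨0,0,0,0,0,0,0,0,0,0,0,0,0,0⟩ := rfl
theorem inv_def (P : GG) : P⁻¹ = ginv P := rfl

instance : Group GG where
  mul_assoc P Q R := by
    show gmul (gmul P Q) R = gmul P (gmul Q R)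
    ext <;> simp only [gmul] <;> ring
  one_mul P := by show gmul _ P = P; ext <;> simp only [gmul, one_def] <;> ring
  mul_one P := by show gmul P _ = P; ext <;> simp only [gmul, one_def] <;> ring
  inv_mul_cancel P := by
    show gmul (ginv P) P = _
    ext <;> simp only [gmul, ginv, one_def] <;> ring

end GG

/-! Rational Heisenberg group. -/
@[ext] structure H3 where
  x : ℚ
  y : ℚ
  z : ℚ

namespace H3
instance : Mul H3 := ⟨fun P Q => ⟨P.x + Q.x, P.y + Q.y, P.z + Q.z + P.x * Q.y⟩⟩
instance : One H3 := ⟨⟨0,0,0⟩⟩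
instance : Inv H3 := ⟨fun P => ⟨-P.x, -P.y, -P.z + P.x * P.y⟩⟩

theorem mul_def (P Q : H3) : P * Q = ⟨P.x + Q.x, P.y + Q.y, P.z + Q.z + P.x * Q.y⟩ := rfl
theorem one_def : (1 : H3) = ⟨0,0,0⟩ := rfl
theorem inv_def (P : H3) : P⁻¹ = ⟨-P.x, -P.y, -P.z + P.x * P.y⟩ := rfl

instance : Group H3 where
  mul_assoc P Q R := by simp only [mul_def]; ext <;> ring
  one_mul P := by simp only [mul_def, one_def]; ext <;> ring
  mul_one P := by simp only [mul_def, one_def]; ext <;> ring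
  inv_mul_cancel P := by simp only [mul_def, inv_def, one_def]; ext <;> ring

theorem pow_formula (P : H3) (m : ℕ) :
    P ^ m = ⟨m * P.x, m * P.y, m * P.z + (m * (m-1) / 2) * P.x * P.y⟩ := by
  induction m with
  | zero => simp [one_def]
  | succ n ih =>
    rw [pow_succ, ih, mul_def]
    ext <;> push_cast <;> ring
end H3

/-- projection from GG to the Heisenberg group -/
def piH : GG →* H3 where
  toFun P := ⟨(P.ca : ℚ), (P.cb : ℚ), (P.cab : ℚ)⟩
  map_one' := by simp [GG.one_def, H3.one_def]
  map_mul' P Q := by simp only [GG.mul_def, GG.gmul, H3.mul_def]; ext <;> push_cast <;> ring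

abbrev F := FreeGroup (Fin 2)
noncomputable abbrev fa : F := FreeGroup.of 0
noncomputable abbrev fb : F := FreeGroup.of 1

/-- generator images -/
def Ag : GG := ⟨1,0,0,0,0,0,0,0,0,0,0,0,0,0⟩
def Bg : GG := ⟨0,1,0,0,0,0,0,0,0,0,0,0,0,0⟩

noncomputable def phig : F →* GG := FreeGroup.lift ![Ag, Bg]

@[simp] theorem phig_fa : phig fa = Ag := by simp [phig]
@[simp] theorem phig_fb : phig fb = Bg := by simp [phig]

noncomputable def psiH : F →* H3 := piH.comp phig

@[simp] theorem psiH_fa : psiH fa = ⟨1,0,0⟩ := by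
  simp [psiH, piH, Ag, Bg]
@[simp] theorem psiH_fb : psiH fb = ⟨0,1,0⟩ := by
  simp [psiH, piH, Ag, Bg]

/-- exponent sums and the commutator-degree invariant -/
noncomputable def ea (w : F) : ℤ := (phig w).ca
noncomputable def eb (w : F) : ℤ := (phig w).cb
noncomputable def cc (w : F) : ℤ := (phig w).cab

theorem psiH_eq (w : F) : psiH w = ⟨(ea w : ℚ), (eb w : ℚ), (cc w : ℚ)⟩ := rfl

/-! arithmetic of ea, eb, cc -/
theorem ea_mul (u v : F) : ea (u * v) = ea u + ea v := by
  simp [ea, map_mul, GG.mul_def, GG.gmul]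
theorem eb_mul (u v : F) : eb (u * v) = eb u + eb v := by
  simp [eb, map_mul, GG.mul_def, GG.gmul]
theorem cc_mul (u v : F) : cc (u * v) = cc u + cc v + ea u * eb v := by
  simp [cc, ea, eb, map_mul, GG.mul_def, GG.gmul]
theorem ea_inv (u : F) : ea u⁻¹ = - ea u := by simp [ea, map_inv, GG.inv_def, GG.ginv]
theorem eb_inv (u : F) : eb u⁻¹ = - eb u := by simp [eb, map_inv, GG.inv_def, GG.ginv]
theorem cc_inv (u : F) : cc u⁻¹ = - cc u + ea u * eb u := by
  simp [cc, ea, eb, map_inv, GG.inv_def, GG.ginv]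
theorem ea_one : ea 1 = 0 := by simp [ea, GG.one_def]
theorem eb_one : eb 1 = 0 := by simp [eb, GG.one_def]
theorem cc_one : cc 1 = 0 := by simp [cc, GG.one_def]
@[simp] theorem ea_fa : ea fa = 1 := by simp [ea, Ag]
@[simp] theorem eb_fa : eb fa = 0 := by simp [eb, Ag]
@[simp] theorem cc_fa : cc fa = 0 := by simp [cc, Ag]
@[simp] theorem ea_fb : ea fb = 0 := by simp [ea, Bg]
@[simp] theorem eb_fb : eb fb = 1 := by simp [eb, Bg]
@[simp] theorem cc_fb : cc fb = 0 := by simp [cc, Bg]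

/-- conjugation invariance of cc on the kernel of (ea, eb) -/
theorem cc_conj (w u : F) (h1 : ea u = 0) (h2 : eb u = 0) :
    cc (w * u * w⁻¹) = cc u := by
  simp only [cc_mul, cc_inv, ea_mul, eb_mul, ea_inv, eb_inv, h1, h2]; ring

/-! the words `v_j = f₁ʲ(a)`, `u_j = f₁ʲ(b)` -/
noncomputable def w1 : F := fa * fb * fa⁻¹
noncomputable def w2 : F := fa * fb * fa⁻¹ * fa⁻¹
noncomputable def w3 : F := fa * fb * fa⁻¹ * fb⁻¹ * fa⁻¹
noncomputable def w4 : F := fa * fb * fa⁻¹ * fb⁻¹ * fa * fb⁻¹ * fa⁻¹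
noncomputable def w5 : F := fa * fb * fa⁻¹ * fb⁻¹ * fa^2 * fb⁻¹ * fa⁻¹
noncomputable def x1 : F := fa * fb * fa⁻¹ * fb⁻¹
noncomputable def w6 : F := x1 * fa * x1⁻¹
noncomputable def t1 : F := fb * fa⁻¹
noncomputable def t2 : F := fa⁻¹
noncomputable def t3 : F := fa * fb⁻¹ * fa⁻¹
noncomputable def t4 : F := fa^2 * fb⁻¹ * fa⁻¹
noncomputable def t5 : F := fa * fb * fa * fb⁻¹ * fa⁻¹
noncomputable def t6 : F := x1 * fb * x1⁻¹

section Key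
variable (f : MulAut F) (m : ℕ)
set_option linter.unusedSectionVars false
variable (hfa' : f fa = fa ^ (m+1) * fb * (fa ^ (m+1))⁻¹)
variable (hfb' : f fb = fa ^ m * fb * (fa ^ (m+1))⁻¹)

include hfa' hfb'

theorem step_w1 : f fa = fa ^ m * w1 * (fa ^ m)⁻¹ := by
  rw [hfa', w1]; group
theorem step_w2 : f w1 = fa ^ m * w2 * (fa ^ m)⁻¹ := by
  simp only [w1, w2, map_mul, map_inv, map_pow, hfa', hfb']; group
theorem step_w3 : f w2 = fa ^ m * w3 * (fa ^ m)⁻¹ := by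
  simp only [w2, w3, map_mul, map_inv, map_pow, hfa', hfb']; group
theorem step_w4 : f w3 = fa ^ m * w4 * (fa ^ m)⁻¹ := by
  simp only [w3, w4, map_mul, map_inv, map_pow, hfa', hfb']; group
theorem step_w5 : f w4 = fa ^ m * w5 * (fa ^ m)⁻¹ := by
  simp only [w4, w5, map_mul, map_inv, map_pow, hfa', hfb']; group
theorem step_w6 : f w5 = fa ^ m * w6 * (fa ^ m)⁻¹ := by
  simp only [w5, w6, x1, map_mul, map_inv, map_pow, hfa', hfb']; group
  simp only [pow_two, zpow_two]; group
theorem step_t1 : f fb = fa ^ m * t1 * (fa ^ m)⁻¹ := by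
  rw [hfb', t1]; group
theorem step_t2 : f t1 = fa ^ m * t2 * (fa ^ m)⁻¹ := by
  simp only [t1, t2, map_mul, map_inv, map_pow, hfa', hfb']; group
theorem step_t3 : f t2 = fa ^ m * t3 * (fa ^ m)⁻¹ := by
  simp only [t2, t3, map_mul, map_inv, map_pow, hfa', hfb']; group
theorem step_t4 : f t3 = fa ^ m * t4 * (fa ^ m)⁻¹ := by
  simp only [t3, t4, map_mul, map_inv, map_pow, hfa', hfb']; group
theorem step_t5 : f t4 = fa ^ m * t5 * (fa ^ m)⁻¹ := by
  simp only [t4, t5, map_mul, map_inv, map_pow, hfa', hfb']; group; simp only [pow_two, zpow_two]; group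
theorem step_t6 : f t5 = fa ^ m * t6 * (fa ^ m)⁻¹ := by
  simp only [t5, t6, x1, map_mul, map_inv, map_pow, hfa', hfb']; group

noncomputable def Xel (m : ℕ) : F :=
  fa ^ m * w1 ^ m * w2 ^ m * w3 ^ m * w4 ^ m * w5 ^ m * x1

theorem iter_a : f (f (f (f (f (f fa))))) = Xel m * fa * (Xel m)⁻¹ := by
  have e1 := step_w1 f m hfa' hfb'
  have e2 := step_w2 f m hfa' hfb'
  have e3 := step_w3 f m hfa' hfb'
  have e4 := step_w4 f m hfa' hfb'
  have e5 := step_w5 f m hfa' hfb'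
  have e6 := step_w6 f m hfa' hfb'
  have A2 : f (f fa) = fa^m * w1^m * w2 * (fa^m * w1^m)⁻¹ := by
    rw [e1]; simp only [map_mul, map_inv, map_pow, e1, e2, conj_pow]; group
  have A3 : f (f (f fa)) = fa^m * w1^m * w2^m * w3 * (fa^m * w1^m * w2^m)⁻¹ := by
    rw [A2]; simp only [map_mul, map_inv, map_pow, e1, e2, e3, conj_pow]; group
  have A4 : f (f (f (f fa))) =
      fa^m * w1^m * w2^m * w3^m * w4 * (fa^m * w1^m * w2^m * w3^m)⁻¹ := by
    rw [A3]; simp only [map_mul, map_inv, map_pow, e1, e2, e3, e4, conj_pow]; group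
  have A5 : f (f (f (f (f fa)))) =
      fa^m * w1^m * w2^m * w3^m * w4^m * w5 * (fa^m * w1^m * w2^m * w3^m * w4^m)⁻¹ := by
    rw [A4]; simp only [map_mul, map_inv, map_pow, e1, e2, e3, e4, e5, conj_pow]; group
  have A6 : f (f (f (f (f (f fa))))) =
      fa^m * w1^m * w2^m * w3^m * w4^m * w5^m * w6 *
        (fa^m * w1^m * w2^m * w3^m * w4^m * w5^m)⁻¹ := by
    rw [A5]; simp only [map_mul, map_inv, map_pow, e1, e2, e3, e4, e5, e6, conj_pow]; group
  rw [A6, Xel, w6]; group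

theorem iter_b : f (f (f (f (f (f fb))))) = Xel m * fb * (Xel m)⁻¹ := by
  have e1 := step_w1 f m hfa' hfb'
  have e2 := step_w2 f m hfa' hfb'
  have e3 := step_w3 f m hfa' hfb'
  have e4 := step_w4 f m hfa' hfb'
  have e5 := step_w5 f m hfa' hfb'
  have d1 := step_t1 f m hfa' hfb'
  have d2 := step_t2 f m hfa' hfb'
  have d3 := step_t3 f m hfa' hfb'
  have d4 := step_t4 f m hfa' hfb'
  have d5 := step_t5 f m hfa' hfb'
  have d6 := step_t6 f m hfa' hfb'
  have A2 : f (f fb) = fa^m * w1^m * t2 * (fa^m * w1^m)⁻¹ := by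
    rw [d1]; simp only [map_mul, map_inv, map_pow, e1, d2, conj_pow]; group
  have A3 : f (f (f fb)) = fa^m * w1^m * w2^m * t3 * (fa^m * w1^m * w2^m)⁻¹ := by
    rw [A2]; simp only [map_mul, map_inv, map_pow, e1, e2, d3, conj_pow]; group
  have A4 : f (f (f (f fb))) =
      fa^m * w1^m * w2^m * w3^m * t4 * (fa^m * w1^m * w2^m * w3^m)⁻¹ := by
    rw [A3]; simp only [map_mul, map_inv, map_pow, e1, e2, e3, d4, conj_pow]; group
  have A5 : f (f (f (f (f fb)))) =
      fa^m * w1^m * w2^m * w3^m * w4^m * t5 * (fa^m * w1^m * w2^m * w3^m * w4^m)⁻¹ := by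
    rw [A4]; simp only [map_mul, map_inv, map_pow, e1, e2, e3, e4, d5, conj_pow]; group
  have A6 : f (f (f (f (f (f fb))))) =
      fa^m * w1^m * w2^m * w3^m * w4^m * w5^m * t6 *
        (fa^m * w1^m * w2^m * w3^m * w4^m * w5^m)⁻¹ := by
    rw [A5]; simp only [map_mul, map_inv, map_pow, e1, e2, e3, e4, e5, d6, conj_pow]; group
  rw [A6, Xel, t6]; group

theorem iter_all : ∀ u : F, f (f (f (f (f (f u))))) = Xel m * u * (Xel m)⁻¹ := by
  intro u
  have h : ((((((f : F →* F).comp (f : F →* F)).comp (f : F →* F)).comp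
      (f : F →* F)).comp (f : F →* F)).comp (f : F →* F)) =
      (MulAut.conj (Xel m)).toMonoidHom := by
    apply FreeGroup.ext_hom
    intro i
    fin_cases i
    · simpa using iter_a f m hfa' hfb'
    · simpa using iter_b f m hfa' hfb'
  have := DFunLike.congr_fun h u
  simpa using this

end Key

/-! Heisenberg values -/
theorem psiH_w1 : psiH w1 = ⟨0, 1, 1⟩ := by
  simp [w1, map_mul, map_inv, H3.mul_def, H3.inv_def]
theorem psiH_w2 : psiH w2 = ⟨-1, 1, 1⟩ := by
  simp [w2, map_mul, map_inv, H3.mul_def, H3.inv_def]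
theorem psiH_w3 : psiH w3 = ⟨-1, 0, 1⟩ := by
  simp [w3, map_mul, map_inv, H3.mul_def, H3.inv_def]
theorem psiH_w4 : psiH w4 = ⟨0, -1, 0⟩ := by
  simp [w4, map_mul, map_inv, H3.mul_def, H3.inv_def]
theorem psiH_w5 : psiH w5 = ⟨1, -1, -1⟩ := by
  simp [w5, map_mul, map_inv, map_pow, H3.mul_def, H3.inv_def, H3.pow_formula]; norm_num
theorem psiH_x1 : psiH x1 = ⟨0, 0, 1⟩ := by
  simp [x1, map_mul, map_inv, H3.mul_def, H3.inv_def]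

theorem psiH_Xel (m : ℕ) : psiH (Xel m) = ⟨0, 0, 3*m^2 + 3*m + 1⟩ := by
  simp only [Xel, map_mul, map_pow, psiH_fa, psiH_w1, psiH_w2, psiH_w3, psiH_w4,
    psiH_w5, psiH_x1, H3.pow_formula, H3.mul_def]
  ext <;> push_cast <;> ring

theorem ea_Xel (m : ℕ) : ea (Xel m) = 0 := by
  have h := psiH_Xel m; rw [psiH_eq] at h
  have := congrArg H3.x h; simpa using this
theorem eb_Xel (m : ℕ) : eb (Xel m) = 0 := by
  have h := psiH_Xel m; rw [psiH_eq] at h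
  have := congrArg H3.y h; simpa using this
theorem cc_Xel (m : ℕ) : cc (Xel m) = 3*m^2 + 3*m + 1 := by
  have h := psiH_Xel m; rw [psiH_eq] at h
  have := congrArg H3.z h
  simp only at this
  exact_mod_cast this

/-! cc values of the basic commutator -/
theorem ea_x1 : ea x1 = 0 := by simp [x1, ea_mul, ea_inv]
theorem eb_x1 : eb x1 = 0 := by simp [x1, eb_mul, eb_inv]
theorem cc_x1 : cc x1 = 1 := by
  have h := psiH_x1; rw [psiH_eq] at h
  have := congrArg H3.z h; simp only at this; exact_mod_cast this

theorem ea_commutator (u v : F) : ea (u * v * u⁻¹ * v⁻¹) = 0 := by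
  simp [ea_mul, ea_inv]
theorem eb_commutator (u v : F) : eb (u * v * u⁻¹ * v⁻¹) = 0 := by
  simp [eb_mul, eb_inv]

/-- the kernel of the abelianization, as a subgroup defined by `ea`, `eb` -/
noncomputable def Ker2 : Subgroup F where
  carrier := {w | ea w = 0 ∧ eb w = 0}
  one_mem' := ⟨ea_one, eb_one⟩
  mul_mem' := by
    rintro u v ⟨h1, h2⟩ ⟨h3, h4⟩
    exact ⟨by rw [ea_mul, h1, h3]; ring, by rw [eb_mul, h2, h4]; ring⟩
  inv_mem' := by
    rintro u ⟨h1, h2⟩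
    exact ⟨by rw [ea_inv, h1]; ring, by rw [eb_inv, h2]; ring⟩

instance : Ker2.Normal := by
  constructor
  rintro n ⟨h1, h2⟩ g
  exact ⟨by simp [ea_mul, ea_inv, h1], by simp [eb_mul, eb_inv, h2]⟩

/-- the normal closure of the commutator -/
noncomputable def NC : Subgroup F := Subgroup.normalClosure {x1}

instance : NC.Normal := Subgroup.normalClosure_normal

theorem x1_mem_NC : x1 ∈ NC := Subgroup.subset_normalClosure rfl

/-- Key lemma B: the kernel of the abelianization is contained in the normal
closure of the commutator. -/
theorem mem_NC_of_ker (w : F) (h1 : ea w = 0) (h2 : eb w = 0) : w ∈ NC := by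
  set Q := F ⧸ NC
  set mk : F →* Q := QuotientGroup.mk' NC with hmk
  set α : Q := mk fa with hα
  set β : Q := mk fb with hβ
  have hone : mk x1 = 1 := (QuotientGroup.eq_one_iff x1).2 x1_mem_NC
  have hc : Commute α β := by
    have : α * β * α⁻¹ * β⁻¹ = 1 := by
      rw [hα, hβ, ← map_inv, ← map_inv, ← map_mul, ← map_mul, ← map_mul]
      exact hone
    have h2 := congrArg (· * (β * α)) this
    simpa [mul_assoc, Commute, SemiconjBy] using h2
  let ψ : F →* Q :=
    { toFun := fun u => α ^ (ea u) * β ^ (eb u)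
      map_one' := by show α ^ ea 1 * β ^ eb 1 = 1; rw [ea_one, eb_one]; simp
      map_mul' := by
        intro u v
        show α ^ ea (u * v) * β ^ eb (u * v) = (α ^ ea u * β ^ eb u) * (α ^ ea v * β ^ eb v)
        rw [ea_mul, eb_mul, zpow_add, zpow_add]
        exact (hc.zpow_zpow (ea v) (eb u)).mul_mul_mul_comm _ _ }
  have hext : mk = ψ := by
    apply FreeGroup.ext_hom
    intro i
    fin_cases i
    · show mk fa = α ^ (ea fa) * β ^ (eb fa)
      rw [ea_fa, eb_fa]; simp [hα]
    · show mk fb = α ^ (ea fb) * β ^ (eb fb)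
      rw [ea_fb, eb_fb]; simp [hβ]
  have : mk w = 1 := by
    rw [hext]
    show α ^ (ea w) * β ^ (eb w) = 1
    rw [h1, h2]; simp
  exact (QuotientGroup.eq_one_iff w).1 this

/-- automorphisms preserve the kernel of the abelianization -/
theorem stab (χ : MulAut F) (w : F) (h1 : ea w = 0) (h2 : eb w = 0) :
    ea (χ w) = 0 ∧ eb (χ w) = 0 := by
  have hw : w ∈ NC := mem_NC_of_ker w h1 h2
  have hnorm : (Ker2.comap (χ : F →* F)).Normal :=
    Subgroup.Normal.comap (by infer_instance) _
  have hle : NC ≤ Ker2.comap (χ : F →* F) := by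
    apply Subgroup.normalClosure_le_normal
    rintro y rfl
    show χ x1 ∈ Ker2
    have : χ x1 = χ fa * χ fb * (χ fa)⁻¹ * (χ fb)⁻¹ := by
      simp [x1, map_mul, map_inv]
    exact this ▸ ⟨ea_commutator _ _, eb_commutator _ _⟩
  exact hle hw

/-- Key lemma C: transport of the `cc` invariant along an automorphism. -/
theorem transport (χ : MulAut F) (w : F) (h1 : ea w = 0) (h2 : eb w = 0) :
    cc (χ w) = cc (χ x1) * cc w := by
  set d := cc (χ x1) with hd
  let T : Subgroup F :=
    { carrier := {u | ea u = 0 ∧ eb u = 0 ∧ cc (χ u) = d * cc u}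
      one_mem' := by
        refine ⟨ea_one, eb_one, ?_⟩
        rw [map_one, cc_one]; ring
      mul_mem' := by
        rintro u v ⟨hu1, hu2, hu3⟩ ⟨hv1, hv2, hv3⟩
        refine ⟨by rw [ea_mul, hu1, hv1]; ring, by rw [eb_mul, hu2, hv2]; ring, ?_⟩
        obtain ⟨hsu1, _⟩ := stab χ u hu1 hu2
        rw [map_mul, cc_mul, cc_mul, hu3, hv3, hsu1, hu1]; ring
      inv_mem' := by
        rintro u ⟨hu1, hu2, hu3⟩
        refine ⟨by rw [ea_inv, hu1]; ring, by rw [eb_inv, hu2]; ring, ?_⟩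
        obtain ⟨hsu1, hsu2⟩ := stab χ u hu1 hu2
        rw [map_inv, cc_inv, cc_inv, hu3, hsu1, hsu2, hu1, hu2]; ring }
  have hTnorm : T.Normal := by
    constructor
    rintro n ⟨hn1, hn2, hn3⟩ g
    obtain ⟨hsn1, hsn2⟩ := stab χ n hn1 hn2
    refine ⟨by simp [ea_mul, ea_inv, hn1], by simp [eb_mul, eb_inv, hn2], ?_⟩
    have e1 : cc (g * n * g⁻¹) = cc n := cc_conj g n hn1 hn2
    have e2 : cc (χ (g * n * g⁻¹)) = cc (χ n) := by
      have : χ (g * n * g⁻¹) = χ g * χ n * (χ g)⁻¹ := by simp [map_mul, map_inv]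
      rw [this]
      exact cc_conj (χ g) (χ n) hsn1 hsn2
    rw [e1, e2, hn3]
  have hx1T : x1 ∈ T := by
    refine ⟨ea_x1, eb_x1, ?_⟩
    rw [cc_x1, ← hd]; ring
  have hle : NC ≤ T := by
    apply @Subgroup.normalClosure_le_normal _ _ _ _ hTnorm
    rintro y rfl
    exact hx1T
  exact (hle (mem_NC_of_ker w h1 h2)).2.2

/-- the transported commutator value is ±1 -/
theorem dchi (χ : MulAut F) : cc (χ x1) = 1 ∨ cc (χ x1) = -1 := by
  obtain ⟨h1, h2⟩ := stab χ⁻¹ x1 ea_x1 eb_x1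
  have hinv : χ (χ⁻¹ x1) = x1 := by
    rw [MulAut.inv_def]; exact χ.apply_symm_apply x1
  have := transport χ (χ⁻¹ x1) h1 h2
  rw [hinv, cc_x1] at this
  rcases Int.eq_one_or_neg_one_of_mul_eq_one' this.symm with ⟨h, _⟩ | ⟨h, _⟩
  · exact Or.inl h
  · exact Or.inr h

/-- the automorphisms `f_k` (`k ≥ 1`) defined by
`f_k(a) = aᵏ b a⁻ᵏ`, `f_k(b) = aᵏ⁻¹ b a⁻ᵏ` are pairwise non-conjugate in `Aut(F)`. -/
theorem stmt16 (k l : ℕ) (hk : 1 ≤ k) (hl : 1 ≤ l) (hkl : k ≠ l)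
    (f g : MulAut F)
    (hfa : f fa = fa ^ k * fb * (fa ^ k)⁻¹)
    (hfb : f fb = fa ^ (k - 1) * fb * (fa ^ k)⁻¹)
    (hga : g fa = fa ^ l * fb * (fa ^ l)⁻¹)
    (hgb : g fb = fa ^ (l - 1) * fb * (fa ^ l)⁻¹) :
    ¬ ∃ χ : MulAut F, χ * f * χ⁻¹ = g := by
  rintro ⟨χ, hχ⟩
  obtain ⟨m, rfl⟩ : ∃ m, k = m + 1 := ⟨k - 1, by omega⟩
  obtain ⟨n, rfl⟩ : ∃ n, l = n + 1 := ⟨l - 1, by omega⟩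
  rw [Nat.add_sub_cancel] at hfb hgb
  have h6f := iter_all f m hfa hfb
  have h6g := iter_all g n hga hgb
  set X := Xel m with hX
  set Y := Xel n with hY
  have hg_of : ∀ u, g u = χ (f (χ⁻¹ u)) := by
    intro u; rw [← hχ]; simp [MulAut.mul_apply]
  have hinv : ∀ v, χ⁻¹ (χ v) = v := fun v => by
    rw [MulAut.inv_def]; exact χ.symm_apply_apply v
  have hginv : ∀ v, χ (χ⁻¹ v) = v := fun v => by
    rw [MulAut.inv_def]; exact χ.apply_symm_apply v
  have hg6 : ∀ u, g (g (g (g (g (g u))))) =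
      χ (f (f (f (f (f (f (χ⁻¹ u))))))) := by
    intro u; simp only [hg_of, hinv]
  have key : ∀ u : F, χ (X * u * X⁻¹) = Y * χ u * Y⁻¹ := by
    intro u
    have e1 := h6g (χ u)
    rw [hg6 (χ u), hinv u, h6f u] at e1
    exact e1
  -- the element z commutes with χ fa
  set z := Y⁻¹ * χ X with hz
  have hzca : z * χ fa = χ fa * z := by
    have hconj : z * χ fa * z⁻¹ = χ fa := by
      have expand : z * χ fa * z⁻¹ = Y⁻¹ * (χ X * χ fa * (χ X)⁻¹) * Y := by
        rw [hz]; group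
      have e2 : χ X * χ fa * (χ X)⁻¹ = χ (X * fa * X⁻¹) := by
        simp [map_mul, map_inv]
      rw [expand, e2, key fa]; group
    calc z * χ fa = z * χ fa * z⁻¹ * z := by group
      _ = χ fa * z := by rw [hconj]
  set w0 := χ⁻¹ z with hw0def
  have hw0 : w0 * fa = fa * w0 := by
    have e : χ⁻¹ (z * χ fa) = χ⁻¹ (χ fa * z) := by rw [hzca]
    simpa [map_mul, hinv, ← hw0def] using e
  -- exponent sums
  have hstabX := stab χ X (by rw [hX]; exact ea_Xel m) (by rw [hX]; exact eb_Xel m)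
  have hez : ea z = 0 := by
    rw [hz, ea_mul, ea_inv, hY, ea_Xel, hstabX.1]; ring
  have hebz : eb z = 0 := by
    rw [hz, eb_mul, eb_inv, hY, eb_Xel, hstabX.2]; ring
  have hw0e := stab χ⁻¹ z hez hebz
  rw [← hw0def] at hw0e
  -- cc w0 = 0 from commuting with fa
  have hgg : phig w0 * phig fa = phig fa * phig w0 := by
    rw [← map_mul, ← map_mul, hw0]
  have hccw0 : cc w0 = 0 := by
    have hc := congrArg GG.caab hgg
    simp [GG.mul_def, GG.gmul, phig_fa, Ag] at hc
    show (phig w0).cab = 0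
    omega
  -- transport
  have hccz : cc z = 0 := by
    have hχw0 : χ w0 = z := by rw [hw0def]; exact hginv z
    have ht := transport χ w0 hw0e.1 hw0e.2
    rw [hχw0, hccw0] at ht
    simpa using ht
  have hccχX : cc (χ X) = cc (χ x1) * cc X :=
    transport χ X (by rw [hX]; exact ea_Xel m) (by rw [hX]; exact eb_Xel m)
  have e : cc z = -(cc Y) + cc (χ X) := by
    rw [hz, cc_mul, cc_inv, ea_inv, hY, ea_Xel, hstabX.2]; ring
  rw [hccz] at e
  have hvalX : cc X = 3*(m:ℤ)^2 + 3*m + 1 := by rw [hX]; exact cc_Xel m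
  have hvalY : cc Y = 3*(n:ℤ)^2 + 3*n + 1 := by rw [hY]; exact cc_Xel n
  rcases dchi χ with hd | hd
  · have heq : (3*(n:ℤ)^2 + 3*n + 1) = 3*(m:ℤ)^2 + 3*m + 1 := by
      rw [← hvalX, ← hvalY]
      have : cc (χ X) = cc X := by rw [hccχX, hd]; ring
      omega
    have hfac3 : (3 * ((n:ℤ) - m)) * ((n:ℤ) + m + 1) = 0 := by linear_combination heq
    rcases mul_eq_zero.1 hfac3 with h | h
    · have : m = n := by omega
      exact hkl (by omega)
    · omega
  · have heq : (3*(n:ℤ)^2 + 3*n + 1) = -(3*(m:ℤ)^2 + 3*m + 1) := by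
      rw [← hvalX, ← hvalY]
      have : cc (χ X) = -(cc X) := by rw [hccχX, hd]; ring
      omega
    nlinarith [sq_nonneg ((m:ℤ)), sq_nonneg ((n:ℤ)),
      (show (0:ℤ) ≤ (m:ℤ) by positivity), (show (0:ℤ) ≤ (n:ℤ) by positivity)]
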